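/- (Corollary 1, IOC with incomplete observations.) Suppose the full-horizon KKT conditions hold for some ω* ∈ ℝ^r with ω* ≠ 0 and some costates λ* ∈ (ℝ^n)^T. Let 1 ≤ t ≤ t+l−1 ≤ T and let (ω̂, λ̂) ∈ ℝ^r × ℝ^n be an element of the kernel of H(t,l) with (ω̂, λ̂) ≠ 0. If rank H(t,l) = r+n−1, then there exists a constant c ≠ 0 such that ω̂ = c·ω*. -/

import Mathlib

open Matrix

noncomputable section

variable {n m r : ℕ}

/-- Block upper bidiagonal matrix `F_x(t,l)` (0-based block indices): diagonal blocks are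
`I_n`, and block `(i, i+1)` is `-(A (t+i))ᵀ`. -/
def Fx (A : ℕ → Matrix (Fin n) (Fin n) ℝ) (t l : ℕ) :
    Matrix (Fin l × Fin n) (Fin l × Fin n) ℝ :=
  fun ip jq =>
    if ip.1 = jq.1 then (if ip.2 = jq.2 then (1 : ℝ) else 0)
    else if (jq.1 : ℕ) = (ip.1 : ℕ) + 1 then -((A (t + (ip.1 : ℕ)))ᵀ ip.2 jq.2)
    else 0

/-- Block diagonal matrix `F_u(t,l)` with diagonal blocks `(B (t+i))ᵀ`. -/
def Fu (B : ℕ → Matrix (Fin n) (Fin m) ℝ) (t l : ℕ) :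
    Matrix (Fin l × Fin m) (Fin l × Fin n) ℝ :=
  fun ip jq => if ip.1 = jq.1 then (B (t + (ip.1 : ℕ)))ᵀ ip.2 jq.2 else 0

/-- Vertical stack `Φ_x(t,l)` of the blocks `(G (t+i))ᵀ`. -/
def Phix (G : ℕ → Matrix (Fin r) (Fin n) ℝ) (t l : ℕ) :
    Matrix (Fin l × Fin n) (Fin r) ℝ :=
  fun ip q => (G (t + (ip.1 : ℕ)))ᵀ ip.2 q

/-- Vertical stack `Φ_u(t,l)` of the blocks `(D (t+i))ᵀ`. -/
def Phiu (D : ℕ → Matrix (Fin r) (Fin m) ℝ) (t l : ℕ) :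
    Matrix (Fin l × Fin m) (Fin r) ℝ :=
  fun ip q => (D (t + (ip.1 : ℕ)))ᵀ ip.2 q

/-- `V(t,l)`: all `n×n` blocks zero except the last one, which is `(A (t+l-1))ᵀ`. -/
def Vm (A : ℕ → Matrix (Fin n) (Fin n) ℝ) (t l : ℕ) :
    Matrix (Fin l × Fin n) (Fin n) ℝ :=
  fun ip q => if (ip.1 : ℕ) = l - 1 then (A (t + l - 1))ᵀ ip.2 q else 0

/-- `H₁(t,l) = F_u(t,l) · F_x(t,l)⁻¹ · Φ_x(t,l) + Φ_u(t,l)`. -/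
def H1m (A : ℕ → Matrix (Fin n) (Fin n) ℝ) (B : ℕ → Matrix (Fin n) (Fin m) ℝ)
    (G : ℕ → Matrix (Fin r) (Fin n) ℝ) (D : ℕ → Matrix (Fin r) (Fin m) ℝ) (t l : ℕ) :
    Matrix (Fin l × Fin m) (Fin r) ℝ :=
  Fu B t l * (Fx A t l)⁻¹ * Phix G t l + Phiu D t l

/-- `H₂(t,l) = F_u(t,l) · F_x(t,l)⁻¹ · V(t,l)`. -/
def H2m (A : ℕ → Matrix (Fin n) (Fin n) ℝ) (B : ℕ → Matrix (Fin n) (Fin m) ℝ) (t l : ℕ) :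
    Matrix (Fin l × Fin m) (Fin n) ℝ :=
  Fu B t l * (Fx A t l)⁻¹ * Vm A t l

/-- The recovery matrix `H(t,l) = [H₁(t,l)  H₂(t,l)]`. -/
def Hm (A : ℕ → Matrix (Fin n) (Fin n) ℝ) (B : ℕ → Matrix (Fin n) (Fin m) ℝ)
    (G : ℕ → Matrix (Fin r) (Fin n) ℝ) (D : ℕ → Matrix (Fin r) (Fin m) ℝ) (t l : ℕ) :
    Matrix (Fin l × Fin m) (Fin r ⊕ Fin n) ℝ :=
  fromCols (H1m A B G D t l) (H2m A B t l)

/-- Stack the vectors `lam t, lam (t+1), …, lam (t+l-1)` into a vector in `ℝ^{nl}`. -/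
def stackVec (lam : ℕ → Fin n → ℝ) (t l : ℕ) : Fin l × Fin n → ℝ :=
  fun ip => lam (t + (ip.1 : ℕ)) ip.2

/-- Full-horizon KKT conditions for the weight vector `ω` with costates `lam 1, …, lam T`. -/
def KKT (A : ℕ → Matrix (Fin n) (Fin n) ℝ) (B : ℕ → Matrix (Fin n) (Fin m) ℝ)
    (G : ℕ → Matrix (Fin r) (Fin n) ℝ) (D : ℕ → Matrix (Fin r) (Fin m) ℝ) (T : ℕ)
    (ω : Fin r → ℝ) (lam : ℕ → Fin n → ℝ) : Prop :=
  -(Fx A 1 T *ᵥ stackVec lam 1 T) + Phix G 1 T *ᵥ ω = 0 ∧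
    Fu B 1 T *ᵥ stackVec lam 1 T + Phiu D 1 T *ᵥ ω = 0

/-- The natural identification of `ℝ^{(l+1)·ι}`-indices with `ℝ^{l·ι} × ℝ^{ι}`-indices. -/
def splitIdx (l : ℕ) (ι : Type*) : Fin (l + 1) × ι → (Fin l × ι) ⊕ ι :=
  fun ip => if h : (ip.1 : ℕ) < l then Sum.inl (⟨ip.1, h⟩, ip.2) else Sum.inr ip.2

/-! Extending the costates by `λ_s = 0` for `s > T` puts every row of the first KKT block in the
form `λ_s - A_sᵀ λ_{s+1} = G_sᵀ ω*`. Restricted to the window `t, …, t+l-1` these rows read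
`F_x λ = Φ_x ω* + V λ_{t+l}`, while the second block reads `F_u λ + Φ_u ω* = 0`. Since `F_x` is
block unitriangular, hence invertible, `(ω*, λ_{t+l})` is a nonzero vector in the kernel of
`H(t,l)`. The rank hypothesis makes this kernel a line, so `(ω̂, λ̂) = c (ω*, λ_{t+l})`, and
`c ≠ 0` because `(ω̂, λ̂) ≠ 0`. -/

theorem Matrix.exists_smul_eq_of_rank_eq_card_sub_one {K ι κ : Type*} [Field K] [Fintype ι]
    [Fintype κ] {M : Matrix ι κ K} (hM : M.rank = Fintype.card κ - 1) {v w : κ → K}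
    (hv : M *ᵥ v = 0) (hv0 : v ≠ 0) (hw : M *ᵥ w = 0) : ∃ c : K, w = c • v := by
  have hker : Module.finrank K (LinearMap.ker M.mulVecLin) = 1 := by
    have := LinearMap.finrank_range_add_finrank_ker M.mulVecLin
    rw [Module.finrank_fintype_fun_eq_card] at this
    have hcard : 0 < Fintype.card κ :=
      Fintype.card_pos_iff.mpr ⟨(Function.ne_iff.mp hv0).choose⟩
    rw [← Matrix.rank] at this
    omega
  obtain ⟨c, hc⟩ := (finrank_eq_one_iff_of_nonzero' (⟨v, hv⟩ : LinearMap.ker M.mulVecLin)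
    fun h => hv0 (congrArg Subtype.val h)).mp hker ⟨w, hw⟩
  exact ⟨c, congrArg Subtype.val hc.symm⟩

theorem stackVec_eq_stackVec_iff {f g : ℕ → Fin n → ℝ} {t l : ℕ} :
    stackVec f t l = stackVec g t l ↔ Set.EqOn f g (Set.Ico t (t + l)) := by
  constructor
  · intro h s ⟨hts, hsl⟩
    funext p
    simpa [stackVec, Nat.add_sub_cancel' hts] using congrFun h (⟨s - t, by omega⟩, p)
  · intro h
    funext ⟨i, p⟩
    simp only [stackVec, h ⟨Nat.le_add_right t i, by omega⟩]

theorem stackVec_indicator_Iic {T t l : ℕ} (h : t + l ≤ T + 1) (lam : ℕ → Fin n → ℝ) :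
    stackVec ((Set.Iic T).indicator lam) t l = stackVec lam t l :=
  stackVec_eq_stackVec_iff.mpr fun s hs =>
    Set.indicator_of_mem (Set.mem_Iic.mpr (by simp only [Set.mem_Ico] at hs; omega)) lam

section Window

variable (A : ℕ → Matrix (Fin n) (Fin n) ℝ) (t l : ℕ)

theorem Fx_blockTriangular : (Fx A t l).BlockTriangular Prod.fst := by
  intro i j hji
  have hne : ¬ (j.1 : ℕ) = i.1 + 1 := by have : (j.1 : ℕ) < i.1 := hji; omega
  simp [Fx, hji.ne', hne]

theorem det_Fx : (Fx A t l).det = 1 := by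
  rw [(Fx_blockTriangular A t l).det]
  refine Finset.prod_eq_one fun a _ => ?_
  suffices h : (Fx A t l).toSquareBlock Prod.fst a = 1 by rw [h, det_one]
  ext ⟨⟨i, p⟩, hi⟩ ⟨⟨j, q⟩, hj⟩
  obtain rfl : i = a := hi
  obtain rfl : j = i := hj
  simp [Fx, toSquareBlock, toSquareBlockProp, one_apply]

theorem Vm_mulVec (μ : Fin n → ℝ) (i : Fin l) (p : Fin n) :
    (Vm A t l *ᵥ μ) (i, p) = if (i : ℕ) + 1 = l then ((A (t + i))ᵀ *ᵥ μ) p else 0 := by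
  simp only [Vm, mulVec, dotProduct, transpose_apply,
    show (i : ℕ) = l - 1 ↔ (i : ℕ) + 1 = l by omega]
  split_ifs with hi
  · rw [show t + l - 1 = t + i by omega]
  · simp

theorem Fx_mulVec_stackVec (lam : ℕ → Fin n → ℝ) :
    Fx A t l *ᵥ stackVec lam t l =
      stackVec (fun s => lam s - (A s)ᵀ *ᵥ lam (s + 1)) t l + Vm A t l *ᵥ lam (t + l) := by
  ext ⟨i, p⟩
  rw [Pi.add_apply, Vm_mulVec]
  simp only [mulVec, dotProduct, Fintype.sum_prod_type]
  by_cases hi : (i : ℕ) + 1 < l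
  · have hne : i ≠ ⟨i + 1, hi⟩ := Fin.ne_of_val_ne (by simp)
    rw [Fintype.sum_eq_add i ⟨i + 1, hi⟩ hne]
    · simp [Fx, stackVec, hne, show (i : ℕ) + 1 ≠ l by omega, mulVec, dotProduct, ← add_assoc,
        sub_eq_add_neg]
    · rintro j ⟨hji, hj⟩
      have hj' : (j : ℕ) ≠ i + 1 := fun h => hj (Fin.ext h)
      simp [Fx, Ne.symm hji, hj']
  · rw [Fintype.sum_eq_single i]
    · simp [Fx, stackVec, show (i : ℕ) + 1 = l by omega, show t + (i : ℕ) + 1 = t + l by omega,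
        mulVec, dotProduct]
    · intro j hji
      have hj' : (j : ℕ) ≠ i + 1 := by omega
      simp [Fx, Ne.symm hji, hj']

end Window

theorem Fu_mulVec_stackVec (B : ℕ → Matrix (Fin n) (Fin m) ℝ) (t l : ℕ) (lam : ℕ → Fin n → ℝ) :
    Fu B t l *ᵥ stackVec lam t l = stackVec (fun s => (B s)ᵀ *ᵥ lam s) t l := by
  ext ⟨i, p⟩
  simp only [mulVec, dotProduct, Fintype.sum_prod_type]
  rw [Fintype.sum_eq_single i fun j hji => by simp [Fu, Ne.symm hji]]
  simp [Fu, stackVec, mulVec, dotProduct]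

theorem Phix_mulVec (G : ℕ → Matrix (Fin r) (Fin n) ℝ) (t l : ℕ) (ω : Fin r → ℝ) :
    Phix G t l *ᵥ ω = stackVec (fun s => (G s)ᵀ *ᵥ ω) t l :=
  rfl

theorem Phiu_mulVec (D : ℕ → Matrix (Fin r) (Fin m) ℝ) (t l : ℕ) (ω : Fin r → ℝ) :
    Phiu D t l *ᵥ ω = stackVec (fun s => (D s)ᵀ *ᵥ ω) t l :=
  rfl

section Recovery

variable {A : ℕ → Matrix (Fin n) (Fin n) ℝ} {B : ℕ → Matrix (Fin n) (Fin m) ℝ}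
  {G : ℕ → Matrix (Fin r) (Fin n) ℝ} {D : ℕ → Matrix (Fin r) (Fin m) ℝ}

theorem Hm_mulVec_eq_zero_of_mulVec_eq {t l : ℕ} {x : Fin l × Fin n → ℝ} {ω : Fin r → ℝ}
    {μ : Fin n → ℝ}
    (hx : Fx A t l *ᵥ x = Phix G t l *ᵥ ω + Vm A t l *ᵥ μ)
    (hu : Fu B t l *ᵥ x + Phiu D t l *ᵥ ω = 0) :
    Hm A B G D t l *ᵥ Sum.elim ω μ = 0 := by
  have hx' : (Fx A t l)⁻¹ *ᵥ (Phix G t l *ᵥ ω + Vm A t l *ᵥ μ) = x := by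
    rw [← hx, mulVec_mulVec, nonsing_inv_mul _ (by simp [det_Fx]), one_mulVec]
  calc Hm A B G D t l *ᵥ Sum.elim ω μ
      = Fu B t l *ᵥ ((Fx A t l)⁻¹ *ᵥ (Phix G t l *ᵥ ω + Vm A t l *ᵥ μ)) + Phiu D t l *ᵥ ω := by
        simp only [Hm, fromCols_mulVec_sumElim, H1m, H2m, add_mulVec, mulVec_add, mulVec_mulVec,
          Matrix.mul_assoc]
        abel
    _ = 0 := by rw [hx', hu]

namespace KKT

variable {T : ℕ} {ω : Fin r → ℝ} {lam : ℕ → Fin n → ℝ}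

theorem costate_eq (h : KKT A B G D T ω lam) :
    Set.EqOn (fun s => (Set.Iic T).indicator lam s - (A s)ᵀ *ᵥ (Set.Iic T).indicator lam (s + 1))
      (fun s => (G s)ᵀ *ᵥ ω) (Set.Ico 1 (1 + T)) := by
  have h₁ := h.1
  rw [neg_add_eq_zero, ← stackVec_indicator_Iic (show 1 + T ≤ T + 1 by omega) lam,
    Fx_mulVec_stackVec, Set.indicator_of_notMem (show 1 + T ∉ Set.Iic T by simp), mulVec_zero,
    add_zero, Phix_mulVec] at h₁
  exact stackVec_eq_stackVec_iff.mp h₁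

theorem stationarity (h : KKT A B G D T ω lam) :
    Set.EqOn (fun s => (B s)ᵀ *ᵥ (Set.Iic T).indicator lam s + (D s)ᵀ *ᵥ ω) 0
      (Set.Ico 1 (1 + T)) := by
  have h₂ := h.2
  rw [← stackVec_indicator_Iic (show 1 + T ≤ T + 1 by omega) lam, Fu_mulVec_stackVec,
    Phiu_mulVec] at h₂
  exact stackVec_eq_stackVec_iff.mp h₂

theorem Hm_mulVec_eq_zero (h : KKT A B G D T ω lam) {t l : ℕ} (ht : 1 ≤ t)
    (htl : t + l - 1 ≤ T) :
    Hm A B G D t l *ᵥ Sum.elim ω ((Set.Iic T).indicator lam (t + l)) = 0 := by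
  have hwin : Set.Ico t (t + l) ⊆ Set.Ico 1 (1 + T) := fun s hs => by
    simp only [Set.mem_Ico] at hs ⊢; omega
  refine Hm_mulVec_eq_zero_of_mulVec_eq (x := stackVec ((Set.Iic T).indicator lam) t l) ?_ ?_
  · rw [Fx_mulVec_stackVec, Phix_mulVec, stackVec_eq_stackVec_iff.mpr (h.costate_eq.mono hwin)]
  · rw [Fu_mulVec_stackVec, Phiu_mulVec]
    exact stackVec_eq_stackVec_iff.mpr (h.stationarity.mono hwin)

end KKT

end Recovery

theorem IOC_incomplete_observations_general (n m r T : ℕ)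
    (A : ℕ → Matrix (Fin n) (Fin n) ℝ) (B : ℕ → Matrix (Fin n) (Fin m) ℝ)
    (G : ℕ → Matrix (Fin r) (Fin n) ℝ) (D : ℕ → Matrix (Fin r) (Fin m) ℝ)
    (ωstar : Fin r → ℝ) (hωstar : ωstar ≠ 0)
    (lamstar : ℕ → Fin n → ℝ) (hKKT : KKT A B G D T ωstar lamstar)
    (t l : ℕ) (ht : 1 ≤ t) (htl : t + l - 1 ≤ T)
    (ωh : Fin r → ℝ) (lamh : Fin n → ℝ)
    (hker : Hm A B G D t l *ᵥ Sum.elim ωh lamh = 0)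
    (hne : Sum.elim ωh lamh ≠ 0)
    (hrank : (Hm A B G D t l).rank = r + n - 1) :
    ∃ c : ℝ, c ≠ 0 ∧ ωh = c • ωstar := by
  obtain ⟨c, hc⟩ := Matrix.exists_smul_eq_of_rank_eq_card_sub_one (by simpa using hrank)
    (hKKT.Hm_mulVec_eq_zero ht htl)
    (fun h => hωstar (funext fun x => congrFun h (Sum.inl x))) hker
  refine ⟨c, fun hc0 => hne (by rw [hc, hc0, zero_smul]), ?_⟩
  funext x
  simpa using congrFun hc (Sum.inl x)

/-- Corollary 1 (IOC with incomplete observations): if the full-horizon KKT conditions hold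
for some nonzero `ω*`, and `rank H(t,l) = r+n−1`, then any nonzero kernel element
`(ω̂, λ̂)` of `H(t,l)` has `ω̂ = c·ω*` for some `c ≠ 0`. -/
theorem IOC_incomplete_observations (n m r T : ℕ) (hn : 0 < n) (hm : 0 < m) (hr : 0 < r) (hT : 1 ≤ T)
    (A : ℕ → Matrix (Fin n) (Fin n) ℝ) (B : ℕ → Matrix (Fin n) (Fin m) ℝ)
    (G : ℕ → Matrix (Fin r) (Fin n) ℝ) (D : ℕ → Matrix (Fin r) (Fin m) ℝ)
    (hAT : A T = 1)
    (ωstar : Fin r → ℝ) (hωstar : ωstar ≠ 0)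
    (lamstar : ℕ → Fin n → ℝ) (hKKT : KKT A B G D T ωstar lamstar)
    (t l : ℕ) (ht : 1 ≤ t) (hl : 1 ≤ l) (htl : t + l - 1 ≤ T)
    (ωh : Fin r → ℝ) (lamh : Fin n → ℝ)
    (hker : Hm A B G D t l *ᵥ Sum.elim ωh lamh = 0)
    (hne : Sum.elim ωh lamh ≠ 0)
    (hrank : (Hm A B G D t l).rank = r + n - 1) :
    ∃ c : ℝ, c ≠ 0 ∧ ωh = c • ωstar :=
  IOC_incomplete_observations_general n m r T A B G D ωstar hωstar lamstar hKKT t l ht htl ωh lamh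
    hker hne hrank
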